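/- In the extremal setup, the maximum degree of G* equals n − k + 1, attained at the vertex v_k, and consequently λ₁(G*) < n − k + 1. -/

import Mathlib

/-!
Write `m = k - 1` and `p 0, …, p m` for the path, so `x (p 0) = min x` and `x (p m) = 1`.
Along the path `x (p j) + x (p (j + 2)) ≤ λ x (p (j + 1))`, hence `1 ≤ U_m(λ/2) x (p 0)`.
The kite `P_{m+1} · K_{n-m}` has principal eigenvalue `t > n - m - 1` and principal ratio at
least `U_m(t/2)`, so extremality gives `U_m(t/2) x (p 0) ≤ 1`, and `U_m` increasing forces
`λ > n - m - 1` (a kite with a long path first rules out `n - m ≤ 3`). As `p m` has no path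
neighbour but `p (m - 1)`, `λ ≤ deg (p m) ≤ n - m`; so `p m` sees every vertex off the path and
`λ = x (p (m - 1)) + ∑_{off path} x < n - m`. A vertex of degree `> n - m` would also see all
off-path vertices, and its neighbours would sum to more than `λ`.
-/

open Classical Matrix

/-- The adjacency matrix of a simple graph on `Fin n`, with real entries. -/
noncomputable def adjMat {n : ℕ} (G : SimpleGraph (Fin n)) : Matrix (Fin n) (Fin n) ℝ :=
  Matrix.of fun u v => if G.Adj u v then (1 : ℝ) else 0

/-- `x` is a principal (Perron) eigenvector of the connected graph `G` with eigenvalue `lam`: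
it is a positive eigenvector of the adjacency matrix.  By Perron–Frobenius, for a connected
graph this forces `lam = λ₁(G)`. -/
def IsPrincipalEigenpair {n : ℕ} (G : SimpleGraph (Fin n)) (lam : ℝ) (x : Fin n → ℝ) : Prop :=
  (∀ v, 0 < x v) ∧ adjMat G *ᵥ x = lam • x

/-- The ratio of the maximum to the minimum entry of a vector. -/
noncomputable def pRatio {n : ℕ} (x : Fin n → ℝ) : ℝ := (⨆ v, x v) / (⨅ v, x v)

/-- Degree of a vertex. -/
noncomputable def deg {n : ℕ} (G : SimpleGraph (Fin n)) (v : Fin n) : ℕ :=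
  (G.neighborSet v).ncard

/-- The kite (lollipop) graph on `Fin n`: a path on the vertices `0, 1, …, r-1`
followed by a clique on the vertices `r-1, r, …, n-1`, i.e. `P_r · K_{n-r+1}`. -/
def kiteGraph (n r : ℕ) : SimpleGraph (Fin n) where
  Adj u v := u ≠ v ∧
    ((u.val < r ∧ v.val < r ∧ (u.val + 1 = v.val ∨ v.val + 1 = u.val)) ∨
      (r ≤ u.val + 1 ∧ r ≤ v.val + 1))
  symm := by
    constructor
    rintro u v ⟨h1, h2⟩
    exact ⟨h1.symm, by tauto⟩
  loopless := by
    constructor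
    rintro u ⟨h1, -⟩
    exact h1 rfl

lemma adjMat_eq_adjMatrix {n : ℕ} (G : SimpleGraph (Fin n)) : adjMat G = G.adjMatrix ℝ := rfl

lemma deg_eq_degree {n : ℕ} (G : SimpleGraph (Fin n)) (v : Fin n) : deg G v = G.degree v := by
  rw [deg, ← SimpleGraph.card_neighborFinset_eq_degree, SimpleGraph.neighborFinset,
    Set.ncard_eq_toFinset_card']

lemma isPrincipalEigenpair_iff {n : ℕ} {G : SimpleGraph (Fin n)} {lam : ℝ} {x : Fin n → ℝ} :
    IsPrincipalEigenpair G lam x ↔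
      (∀ v, 0 < x v) ∧ ∀ u, ∑ w ∈ G.neighborFinset u, x w = lam * x u := by
  simp only [IsPrincipalEigenpair, adjMat_eq_adjMatrix, funext_iff,
    SimpleGraph.adjMatrix_mulVec_apply, Pi.smul_apply, smul_eq_mul]

lemma pRatio_eq {n : ℕ} {x : Fin n → ℝ} {a b : Fin n} (hmin : ∀ u, x a ≤ x u)
    (hmax : ∀ u, x u ≤ x b) : pRatio x = x b / x a := by
  have : Nonempty (Fin n) := ⟨a⟩
  rw [pRatio, le_antisymm (ciSup_le hmax) (le_ciSup (Finite.bddAbove_range x) b),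
    le_antisymm (ciInf_le (Finite.bddBelow_range x) a) (le_ciInf hmin)]

lemma div_le_pRatio {n : ℕ} {x : Fin n → ℝ} (hpos : ∀ u, 0 < x u) (a b : Fin n) :
    x b / x a ≤ pRatio x := by
  have : Nonempty (Fin n) := ⟨a⟩
  obtain ⟨c, hc⟩ := Finite.exists_min x
  have hinf : 0 < ⨅ u, x u := (hpos c).trans_le (le_ciInf hc)
  exact div_le_div₀ ((hpos b).le.trans (le_ciSup (Finite.bddAbove_range x) b))
    (le_ciSup (Finite.bddAbove_range x) b) hinf (ciInf_le (Finite.bddBelow_range x) a)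

/-- `chebU t i = U_i(t / 2)` for the Chebyshev polynomials `U_i` of the second kind: the
entries of an eigenvector with eigenvalue `t` along a pendant path, read from its end. -/
noncomputable def chebU (t : ℝ) : ℕ → ℝ
  | 0 => 1
  | 1 => t
  | i + 2 => t * chebU t (i + 1) - chebU t i

section chebU

variable {s t : ℝ}

@[simp] lemma chebU_zero (t : ℝ) : chebU t 0 = 1 := rfl

@[simp] lemma chebU_one (t : ℝ) : chebU t 1 = t := rfl

lemma chebU_add_two (t : ℝ) (i : ℕ) : chebU t (i + 2) = t * chebU t (i + 1) - chebU t i := rfl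

lemma chebU_pos_and_sub_one_mul_le (ht : 2 ≤ t) (i : ℕ) :
    0 < chebU t i ∧ (t - 1) * chebU t i ≤ chebU t (i + 1) := by
  induction i with
  | zero => simp
  | succ i ih =>
    obtain ⟨hpos, hle⟩ := ih
    refine ⟨by nlinarith, ?_⟩
    rw [chebU_add_two]
    nlinarith

lemma chebU_pos (ht : 2 ≤ t) (i : ℕ) : 0 < chebU t i :=
  (chebU_pos_and_sub_one_mul_le ht i).1

lemma chebU_le_chebU_succ (ht : 2 ≤ t) (i : ℕ) : chebU t i ≤ chebU t (i + 1) := by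
  nlinarith [chebU_pos_and_sub_one_mul_le ht i]

lemma pow_le_chebU (ht : 2 ≤ t) (i : ℕ) : (t - 1) ^ i ≤ chebU t i := by
  induction i with
  | zero => simp
  | succ i ih =>
    calc (t - 1) ^ (i + 1) = (t - 1) * (t - 1) ^ i := pow_succ' _ _
      _ ≤ (t - 1) * chebU t i := by gcongr; linarith
      _ ≤ chebU t (i + 1) := (chebU_pos_and_sub_one_mul_le ht i).2

/-- The ratios `chebU t (i + 1) / chebU t i` increase strictly with `t`. -/
lemma chebU_le_and_mul_lt (hs : 2 ≤ s) (hst : s < t) (i : ℕ) :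
    chebU s i ≤ chebU t i ∧ chebU s (i + 1) * chebU t i < chebU t (i + 1) * chebU s i := by
  have ht : 2 ≤ t := hs.trans hst.le
  induction i with
  | zero => simpa using hst
  | succ i ih =>
    obtain ⟨hle, hlt⟩ := ih
    have hle' : chebU s (i + 1) ≤ chebU t (i + 1) := by
      nlinarith [chebU_pos hs i, chebU_pos ht i, chebU_pos ht (i + 1)]
    refine ⟨hle', ?_⟩
    rw [chebU_add_two, chebU_add_two]
    nlinarith [mul_pos (sub_pos.2 hst) (mul_pos (chebU_pos hs (i + 1)) (chebU_pos ht (i + 1)))]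

lemma chebU_lt_chebU (hs : 2 ≤ s) (hst : s < t) (i : ℕ) :
    chebU s (i + 1) < chebU t (i + 1) := by
  obtain ⟨hle, hlt⟩ := chebU_le_and_mul_lt hs hst i
  nlinarith [chebU_pos hs i, chebU_pos (hs.trans hst.le) (i + 1)]

@[fun_prop]
lemma continuous_chebU (i : ℕ) : Continuous fun t => chebU t i := by
  suffices ∀ i, Continuous (fun t => chebU t i) ∧ Continuous (fun t => chebU t (i + 1)) from
    (this i).1
  intro i
  induction i with
  | zero => exact ⟨continuous_const, continuous_id⟩
  | succ i ih =>
    refine ⟨ih.2, ?_⟩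
    simp only [chebU_add_two]
    exact (continuous_id.mul ih.2).sub ih.1

end chebU

structure IsGeodesic {V : Type*} (G : SimpleGraph V) (p : ℕ → V) (m : ℕ) : Prop where
  adj : ∀ i < m, G.Adj (p i) (p (i + 1))
  le_dist : m ≤ G.dist (p 0) (p m)

namespace IsGeodesic

variable {V : Type*} {G : SimpleGraph V} {p : ℕ → V} {m i j : ℕ} {w : V}

lemma dist_le (hp : IsGeodesic G p m) (hG : G.Connected) (hij : i ≤ j) (hjm : j ≤ m) :
    G.dist (p i) (p j) ≤ j - i := by
  induction j, hij using Nat.le_induction with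
  | base => simp
  | succ j hij ih =>
    have := hG.dist_triangle (u := p i) (v := p j) (w := p (j + 1))
    have := (SimpleGraph.dist_eq_one_iff_adj.2 (hp.adj j (by omega))).le
    have := ih (by omega)
    omega

lemma sub_le_dist (hp : IsGeodesic G p m) (hG : G.Connected) (hij : i ≤ j) (hjm : j ≤ m) :
    j - i ≤ G.dist (p i) (p j) := by
  have := hG.dist_triangle (u := p 0) (v := p i) (w := p m)
  have := hG.dist_triangle (u := p i) (v := p j) (w := p m)
  have := hp.dist_le hG (Nat.zero_le i) (hij.trans hjm)
  have := hp.dist_le hG hjm le_rfl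
  have := hp.le_dist
  omega

lemma injOn (hp : IsGeodesic G p m) (hG : G.Connected) : Set.InjOn p (Set.Iic m) := by
  intro i hi j hj hpij
  rcases le_total i j with hij | hji
  · have := hp.sub_le_dist hG hij hj
    rw [hpij, SimpleGraph.dist_self] at this
    omega
  · have := hp.sub_le_dist hG hji hi
    rw [hpij, SimpleGraph.dist_self] at this
    omega

lemma le_add_one_of_adj (hp : IsGeodesic G p m) (hG : G.Connected) (hij : i ≤ j)
    (hjm : j ≤ m) (h : G.Adj (p i) (p j)) : j ≤ i + 1 := by
  have := hp.sub_le_dist hG hij hjm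
  have := (SimpleGraph.dist_eq_one_iff_adj.2 h).le
  omega

lemma le_add_two_of_adj_of_adj (hp : IsGeodesic G p m) (hG : G.Connected) (hij : i ≤ j)
    (hjm : j ≤ m) (hi : G.Adj (p i) w) (hj : G.Adj w (p j)) : j ≤ i + 2 := by
  have := hp.sub_le_dist hG hij hjm
  have := hG.dist_triangle (u := p i) (v := w) (w := p j)
  have := (SimpleGraph.dist_eq_one_iff_adj.2 hi).le
  have := (SimpleGraph.dist_eq_one_iff_adj.2 hj).le
  omega

end IsGeodesic

namespace IsPrincipalEigenpair

variable {n m : ℕ} {G : SimpleGraph (Fin n)} {lam : ℝ} {x : Fin n → ℝ}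

lemma sum_neighborFinset (h : IsPrincipalEigenpair G lam x) (u : Fin n) :
    ∑ w ∈ G.neighborFinset u, x w = lam * x u :=
  (isPrincipalEigenpair_iff.1 h).2 u

lemma sum_le_mul_of_subset (h : IsPrincipalEigenpair G lam x) {u : Fin n} {s : Finset (Fin n)}
    (hs : s ⊆ G.neighborFinset u) : ∑ w ∈ s, x w ≤ lam * x u :=
  h.sum_neighborFinset u ▸ Finset.sum_le_sum_of_subset_of_nonneg hs fun w _ _ => (h.1 w).le

lemma sum_eq_of_neighborFinset_subset (h : IsPrincipalEigenpair G lam x) {u : Fin n}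
    {s : Finset (Fin n)} (hs : G.neighborFinset u ⊆ s) (hcard : s.card ≤ G.degree u) :
    ∑ w ∈ s, x w = lam * x u := by
  rw [← Finset.eq_of_subset_of_card_le hs (by rwa [G.card_neighborFinset_eq_degree])]
  exact h.sum_neighborFinset u

lemma le_mul_of_adj (h : IsPrincipalEigenpair G lam x) {u w : Fin n} (hw : G.Adj u w) :
    x w ≤ lam * x u := by
  simpa using h.sum_le_mul_of_subset (s := {w}) (by simpa using hw)

lemma add_le_mul_of_adj (h : IsPrincipalEigenpair G lam x) {u w w' : Fin n} (hne : w ≠ w')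
    (hw : G.Adj u w) (hw' : G.Adj u w') : x w + x w' ≤ lam * x u := by
  rw [← Finset.sum_pair hne]
  exact h.sum_le_mul_of_subset (by simp [Finset.insert_subset_iff, hw, hw'])

lemma le_degree (h : IsPrincipalEigenpair G lam x) (hx1 : ∀ u, x u ≤ 1) {u : Fin n}
    (hu : x u = 1) : lam ≤ G.degree u := by
  have := h.sum_neighborFinset u
  rw [hu, mul_one] at this
  rw [← this, ← G.card_neighborFinset_eq_degree, ← nsmul_one]
  exact Finset.sum_le_card_nsmul _ _ 1 fun w _ => hx1 w

lemma le_pow_mul (h : IsPrincipalEigenpair G lam x) (hlam : 0 ≤ lam) {p : ℕ → Fin n}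
    (hadj : ∀ i < m, G.Adj (p i) (p (i + 1))) {j : ℕ} (hj : j ≤ m) :
    x (p j) ≤ lam ^ j * x (p 0) := by
  induction j with
  | zero => simp
  | succ j ih =>
    calc x (p (j + 1)) ≤ lam * x (p j) := h.le_mul_of_adj (hadj j (by omega))
      _ ≤ lam * (lam ^ j * x (p 0)) := by gcongr; exact ih (by omega)
      _ = lam ^ (j + 1) * x (p 0) := by ring

/-- Along a path without backtracking, the entries grow at most like `chebU lam`: the cross
ratio `x (p (j + 1)) / x (p j) ≤ chebU lam (j + 1) / chebU lam j` propagates through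
`x (p j) + x (p (j + 2)) ≤ lam * x (p (j + 1))`. -/
lemma le_chebU_mul (h : IsPrincipalEigenpair G lam x) (hlam : 2 ≤ lam) {p : ℕ → Fin n}
    (hadj : ∀ i < m, G.Adj (p i) (p (i + 1))) (hne : ∀ i, i + 2 ≤ m → p i ≠ p (i + 2))
    {j : ℕ} (hj : j ≤ m) : x (p j) ≤ chebU lam j * x (p 0) := by
  have hratio : ∀ j, j + 1 ≤ m →
      x (p (j + 1)) * chebU lam j ≤ x (p j) * chebU lam (j + 1) := by
    intro j hj
    induction j with
    | zero => simpa [mul_comm] using h.le_mul_of_adj (hadj 0 (by omega))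
    | succ j ih =>
      have hstep := h.add_le_mul_of_adj (hne j (by omega)) (hadj j (by omega)).symm
        (hadj (j + 1) (by omega))
      rw [chebU_add_two]
      nlinarith [ih (by omega), chebU_pos hlam (j + 1)]
  induction j with
  | zero => simp
  | succ j ih =>
    have := chebU_pos hlam j
    refine le_of_mul_le_mul_right ?_ this
    nlinarith [hratio j hj, ih (by omega), chebU_pos hlam (j + 1)]

end IsPrincipalEigenpair

/-- The equation for the principal eigenvalue `t` of `kiteGraph n (a + 2)`, where
`μ = n - a - 2`. -/
lemma exists_kite_root {μ : ℝ} (hμ : 2 ≤ μ) (a : ℕ) :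
    ∃ t ∈ Set.Ioo μ (μ + 1), chebU t (a + 2) * (t + 1 - μ) = μ * chebU t (a + 1) := by
  let F : ℝ → ℝ := fun t => chebU t (a + 2) * (t + 1 - μ) - μ * chebU t (a + 1)
  have hF : Continuous F := by unfold F; fun_prop
  have hFμ : F μ < 0 := by
    have := chebU_pos hμ a
    simp only [F, chebU_add_two]
    nlinarith
  have hFμ1 : 0 < F (μ + 1) := by
    have := chebU_pos (by linarith : 2 ≤ μ + 1) (a + 1)
    have := chebU_le_chebU_succ (by linarith : 2 ≤ μ + 1) a
    simp only [F, chebU_add_two]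
    nlinarith
  obtain ⟨t, ht, hFt⟩ := intermediate_value_Ioo (by linarith) hF.continuousOn ⟨hFμ, hFμ1⟩
  exact ⟨t, ht, sub_eq_zero.1 hFt⟩

section kite

variable {n a : ℕ} {t c : ℝ}

lemma kiteGraph_adj_succ {r i : ℕ} (hi : i + 1 < n) :
    (kiteGraph n r).Adj ⟨i, by omega⟩ ⟨i + 1, hi⟩ := by
  simp only [kiteGraph, ne_eq, Fin.mk.injEq, true_or, and_true]
  omega

lemma kiteGraph_connected (r : ℕ) (hn : 0 < n) : (kiteGraph n r).Connected := by
  have hreach : ∀ i (hi : i < n), (kiteGraph n r).Reachable ⟨0, hn⟩ ⟨i, hi⟩ := by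
    intro i hi
    induction i with
    | zero => rfl
    | succ i ih => exact (ih (by omega)).trans (kiteGraph_adj_succ hi).reachable
  have : Nonempty (Fin n) := ⟨⟨0, hn⟩⟩
  exact SimpleGraph.connected_iff_exists_forall_reachable _ |>.2
    ⟨⟨0, hn⟩, fun w => hreach w.1 w.2⟩

/-- The clique of `kiteGraph n (a + 2)` without the junction vertex `a + 1`. -/
def kiteClique (n a : ℕ) : Finset (Fin n) := Finset.univ.filter fun w => a + 2 ≤ w.val

lemma card_kiteClique : (kiteClique n a).card = n - (a + 2) := by
  have := Finset.card_filter_add_card_filter_not (s := Finset.univ)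
    (fun w : Fin n => w.val < a + 2)
  simp only [Fin.card_filter_val_lt, not_lt, Finset.card_univ, Fintype.card_fin] at this
  rw [kiteClique]
  omega

lemma kiteGraph_neighborFinset_zero (h : 1 < n) :
    (kiteGraph n (a + 2)).neighborFinset ⟨0, by omega⟩ = {⟨1, h⟩} := by
  ext w
  rw [SimpleGraph.mem_neighborFinset]
  simp only [kiteGraph, Finset.mem_singleton, ne_eq, Fin.ext_iff]
  omega

lemma kiteGraph_neighborFinset_path {i : ℕ} (hi : i < a) (h : a + 2 ≤ n) :
    (kiteGraph n (a + 2)).neighborFinset ⟨i + 1, by omega⟩ =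
      {⟨i, by omega⟩, ⟨i + 2, by omega⟩} := by
  ext w
  rw [SimpleGraph.mem_neighborFinset]
  simp only [kiteGraph, Finset.mem_insert, Finset.mem_singleton, ne_eq, Fin.ext_iff]
  omega

lemma kiteGraph_neighborFinset_junction (h : a + 2 ≤ n) :
    (kiteGraph n (a + 2)).neighborFinset ⟨a + 1, by omega⟩ =
      insert ⟨a, by omega⟩ (kiteClique n a) := by
  ext w
  rw [SimpleGraph.mem_neighborFinset]
  simp only [kiteGraph, kiteClique, Finset.mem_insert,
    Finset.mem_filter, Finset.mem_univ, true_and, ne_eq, Fin.ext_iff]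
  omega

lemma kiteGraph_neighborFinset_clique {u : Fin n} (hu : u ∈ kiteClique n a) :
    (kiteGraph n (a + 2)).neighborFinset u =
      insert ⟨a + 1, by simp [kiteClique] at hu; omega⟩ ((kiteClique n a).erase u) := by
  simp only [kiteClique, Finset.mem_filter, Finset.mem_univ, true_and] at hu
  ext w
  rw [SimpleGraph.mem_neighborFinset]
  simp only [kiteGraph, kiteClique, Finset.mem_insert,
    Finset.mem_erase, Finset.mem_filter, Finset.mem_univ, true_and, ne_eq, Fin.ext_iff]
  omega


noncomputable def kiteVec (n a : ℕ) (t c : ℝ) (u : Fin n) : ℝ :=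
  if u.val < a + 2 then chebU t u else c

lemma sum_kiteVec_of_subset {s : Finset (Fin n)} (hs : s ⊆ kiteClique n a) :
    ∑ w ∈ s, kiteVec n a t c w = s.card * c := by
  rw [← nsmul_eq_mul, ← Finset.sum_const]
  refine Finset.sum_congr rfl fun w hw => if_neg ?_
  have := hs hw
  simp only [kiteClique, Finset.mem_filter] at this
  omega

lemma kiteVec_isPrincipalEigenpair (h : a + 2 ≤ n) (ht : 2 ≤ t) (hc : 0 < c)
    (hjunction : chebU t a + (n - (a + 2) : ℕ) * c = t * chebU t (a + 1))
    (hclique : chebU t (a + 1) + ((n - (a + 2) : ℕ) - 1) * c = t * c) :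
    IsPrincipalEigenpair (kiteGraph n (a + 2)) t (kiteVec n a t c) := by
  refine isPrincipalEigenpair_iff.2 ⟨fun u => ?_, fun ⟨i, hi⟩ => ?_⟩
  · unfold kiteVec
    split_ifs
    exacts [chebU_pos ht _, hc]
  rcases Nat.lt_or_ge i (a + 2) with hpath | hcl
  · rcases i with _ | i
    · rw [kiteGraph_neighborFinset_zero (by omega), Finset.sum_singleton]
      simp [kiteVec]
    rcases Nat.lt_or_ge i a with hi' | hi'
    · rw [kiteGraph_neighborFinset_path hi' h, Finset.sum_pair (by simp)]
      simp only [kiteVec, if_pos hpath, if_pos (show i < a + 2 by omega),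
        if_pos (show i + 2 < a + 2 by omega), chebU_add_two]
      ring
    · obtain rfl : i = a := by omega
      rw [kiteGraph_neighborFinset_junction h,
        Finset.sum_insert (by simp [kiteClique]), sum_kiteVec_of_subset subset_rfl,
        card_kiteClique]
      simpa [kiteVec] using hjunction
  · have hmem : (⟨i, hi⟩ : Fin n) ∈ kiteClique n a := by simpa [kiteClique] using hcl
    rw [kiteGraph_neighborFinset_clique hmem, Finset.sum_insert (by simp [kiteClique]),
      sum_kiteVec_of_subset (Finset.erase_subset _ _), Finset.card_erase_of_mem hmem,
      card_kiteClique, Nat.cast_sub (by omega)]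
    simpa [kiteVec, if_neg (show ¬ i < a + 2 by omega)] using hclique

lemma exists_kite_eigenpair (h : a + 4 ≤ n) :
    ∃ t y, ((n - (a + 2) : ℕ) : ℝ) < t ∧ IsPrincipalEigenpair (kiteGraph n (a + 2)) t y ∧
      chebU t (a + 1) ≤ pRatio y := by
  set μ : ℝ := ((n - (a + 2) : ℕ) : ℝ)
  have hμ : 2 ≤ μ := by unfold μ; exact_mod_cast (by omega : 2 ≤ n - (a + 2))
  obtain ⟨t, ⟨hμt, -⟩, hroot⟩ := exists_kite_root hμ a
  have ht : 2 ≤ t := by linarith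
  have hden : 0 < t + 1 - μ := by linarith
  set c := chebU t (a + 1) / (t + 1 - μ)
  have hc : c * (t + 1 - μ) = chebU t (a + 1) := div_mul_cancel₀ _ hden.ne'
  have hpair : IsPrincipalEigenpair (kiteGraph n (a + 2)) t (kiteVec n a t c) := by
    refine kiteVec_isPrincipalEigenpair (by omega) ht (div_pos (chebU_pos ht _) hden) ?_ ?_
    · have : μ * c = chebU t (a + 2) := by
        rw [← mul_left_inj' hden.ne', mul_assoc, hc, hroot, mul_comm]
      rw [this, chebU_add_two]
      ring
    · linear_combination -hc
  refine ⟨t, _, hμt, hpair, ?_⟩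
  simpa [kiteVec] using div_le_pRatio hpair.1 ⟨0, by omega⟩ ⟨a + 1, by omega⟩

end kite

lemma three_pow_lt_seven_pow {n : ℕ} (hn : 30 ≤ n) : (3 : ℝ) ^ n < 7 ^ (n - 9) := by
  obtain ⟨j, rfl⟩ := Nat.exists_eq_add_of_le' hn
  rw [show j + 30 - 9 = j + 21 by omega, pow_add, pow_add]
  exact mul_lt_mul_of_le_of_lt_of_nonneg_of_pos (pow_le_pow_left₀ (by norm_num) (by norm_num) j)
    (by norm_num) (by positivity) (by positivity)

def offPath {n : ℕ} (p : ℕ → Fin n) (m : ℕ) : Finset (Fin n) :=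
  Finset.univ \ (Finset.range (m + 1)).image p

section offPath

variable {n m : ℕ} {p : ℕ → Fin n}

lemma mem_offPath {w : Fin n} : w ∈ offPath p m ↔ ∀ i ≤ m, p i ≠ w := by
  simp [offPath]

lemma notMem_offPath {i : ℕ} (hi : i ≤ m) : p i ∉ offPath p m :=
  fun hp => mem_offPath.1 hp i hi rfl

lemma exists_eq_of_notMem_offPath {w : Fin n} (hw : w ∉ offPath p m) : ∃ i ≤ m, p i = w := by
  simpa [mem_offPath] using hw

end offPath

/-- The setup of `max_degree_eq`, with the path reindexed by `ℕ` and `m = k - 1`. -/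
structure ExtremalPath {n : ℕ} (G : SimpleGraph (Fin n)) (lam : ℝ) (x : Fin n → ℝ)
    (p : ℕ → Fin n) (m : ℕ) : Prop where
  connected : G.Connected
  eigenpair : IsPrincipalEigenpair G lam x
  le_one : ∀ u, x u ≤ 1
  extremal : ∀ (G' : SimpleGraph (Fin n)), G'.Connected →
    ∀ (lam' : ℝ) (x' : Fin n → ℝ), IsPrincipalEigenpair G' lam' x' →
      pRatio x' ≤ pRatio x
  one_le : 1 ≤ m
  adj : ∀ i < m, G.Adj (p i) (p (i + 1))
  min_le : ∀ u, x (p 0) ≤ x u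
  eq_one : x (p m) = 1
  le_dist : ∀ b, x b = 1 → m ≤ G.dist (p 0) b

namespace ExtremalPath

variable {n m : ℕ} {G : SimpleGraph (Fin n)} {lam : ℝ} {x : Fin n → ℝ} {p : ℕ → Fin n}

lemma isGeodesic (h : ExtremalPath G lam x p m) : IsGeodesic G p m :=
  ⟨h.adj, h.le_dist _ h.eq_one⟩

lemma apply_ne (h : ExtremalPath G lam x p m) {i j : ℕ} (hi : i ≤ m) (hj : j ≤ m)
    (hij : i ≠ j) : p i ≠ p j :=
  fun he => hij (h.isGeodesic.injOn h.connected hi hj he)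

lemma card_image_range (h : ExtremalPath G lam x p m) :
    ((Finset.range (m + 1)).image p).card = m + 1 := by
  rw [Finset.card_image_of_injOn, Finset.card_range]
  exact fun i hi j hj => h.isGeodesic.injOn h.connected
    (Nat.lt_succ_iff.1 (Finset.mem_range.1 hi)) (Nat.lt_succ_iff.1 (Finset.mem_range.1 hj))

lemma lt_card (h : ExtremalPath G lam x p m) : m < n := by
  simpa [h.card_image_range] using Finset.card_le_univ ((Finset.range (m + 1)).image p)

lemma card_offPath (h : ExtremalPath G lam x p m) : (offPath p m).card = n - (m + 1) := by
  rw [offPath, Finset.card_univ_sdiff, Fintype.card_fin, h.card_image_range]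

lemma lam_pos (h : ExtremalPath G lam x p m) : 0 < lam := by
  have := h.eigenpair.le_mul_of_adj (h.adj 0 h.one_le)
  have := h.eigenpair.1 (p 0)
  have := h.eigenpair.1 (p 1)
  nlinarith

lemma pred_lt_one (h : ExtremalPath G lam x p m) : x (p (m - 1)) < 1 := by
  refine (h.le_one _).lt_of_ne fun he => ?_
  have := h.le_dist _ he
  have := h.isGeodesic.dist_le h.connected (Nat.zero_le (m - 1)) (Nat.sub_le m 1)
  have := h.one_le
  omega

lemma pRatio_eq (h : ExtremalPath G lam x p m) : pRatio x = 1 / x (p 0) := by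
  rw [_root_.pRatio_eq h.min_le (b := p m) (fun u => h.eq_one ▸ h.le_one u), h.eq_one]

lemma one_le_pow_mul (h : ExtremalPath G lam x p m) : 1 ≤ lam ^ m * x (p 0) :=
  h.eq_one ▸ h.eigenpair.le_pow_mul h.lam_pos.le h.adj le_rfl

lemma one_le_chebU_mul (h : ExtremalPath G lam x p m) (hlam : 2 ≤ lam) :
    1 ≤ chebU lam m * x (p 0) :=
  h.eq_one ▸ h.eigenpair.le_chebU_mul hlam h.adj
    (fun i hi => h.apply_ne (by omega) hi (by omega)) le_rfl

/-- Comparison with the kite `P_{r+1} · K_{n-r}` through the maximality of the principal ratio. -/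
lemma exists_chebU_mul_le_one (h : ExtremalPath G lam x p m) {r : ℕ} (hr : 1 ≤ r)
    (hrn : r + 3 ≤ n) : ∃ t, ((n - (r + 1) : ℕ) : ℝ) < t ∧ chebU t r * x (p 0) ≤ 1 := by
  obtain ⟨t, y, ht, hpair, hy⟩ := exists_kite_eigenpair (n := n) (a := r - 1) (by omega)
  rw [show r - 1 + 2 = r + 1 by omega] at ht hpair
  rw [show r - 1 + 1 = r by omega] at hy
  refine ⟨t, ht, ?_⟩
  have := hy.trans (h.extremal _ (kiteGraph_connected _ (by omega)) _ _ hpair)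
  rwa [h.pRatio_eq, le_div_iff₀ (h.eigenpair.1 _)] at this

lemma neighborFinset_last_subset (h : ExtremalPath G lam x p m) :
    G.neighborFinset (p m) ⊆ insert (p (m - 1)) (offPath p m) := by
  intro w hw
  rw [SimpleGraph.mem_neighborFinset] at hw
  rw [Finset.mem_insert, or_iff_not_imp_right]
  intro hoff
  obtain ⟨i, hi, rfl⟩ := exists_eq_of_notMem_offPath hoff
  have := h.isGeodesic.le_add_one_of_adj h.connected hi le_rfl hw.symm
  obtain rfl | hlt := hi.eq_or_lt
  · exact absurd hw (G.loopless.irrefl _)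
  · rw [show i = m - 1 by omega]

lemma degree_last_le (h : ExtremalPath G lam x p m) : G.degree (p m) ≤ n - m := by
  rw [← G.card_neighborFinset_eq_degree]
  have := (Finset.card_le_card h.neighborFinset_last_subset).trans (Finset.card_insert_le _ _)
  rw [h.card_offPath] at this
  have := h.lt_card
  omega

lemma add_four_le (h : ExtremalPath G lam x p m) (hn : 30 ≤ n) : m + 4 ≤ n := by
  by_contra! hlt
  have hlam : lam ≤ 3 := by
    have := h.eigenpair.le_degree h.le_one h.eq_one
    have : (G.degree (p m) : ℝ) ≤ 3 := by exact_mod_cast (h.degree_last_le.trans (by omega))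
    linarith
  obtain ⟨t, ht, hle⟩ := h.exists_chebU_mul_le_one (r := n - 9) (by omega) (by omega)
  have ht8 : (8 : ℝ) ≤ ((n - (n - 9 + 1) : ℕ) : ℝ) := by exact_mod_cast (by omega)
  have hx0 := h.eigenpair.1 (p 0)
  have hpow : (7 : ℝ) ^ (n - 9) ≤ chebU t (n - 9) :=
    (pow_le_pow_left₀ (by norm_num) (by linarith) _).trans (pow_le_chebU (by linarith) _)
  have hlam_pow : lam ^ m ≤ 3 ^ n :=
    (pow_le_pow_left₀ h.lam_pos.le hlam m).trans (pow_le_pow_right₀ (by norm_num) h.lt_card.le)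
  nlinarith [three_pow_lt_seven_pow hn, h.one_le_pow_mul]

lemma two_lt_lam (h : ExtremalPath G lam x p m) (hn : 30 ≤ n) : 2 < lam := by
  have hm := h.add_four_le hn
  obtain ⟨t, ht, hle⟩ := h.exists_chebU_mul_le_one h.one_le (by omega)
  have ht3 : (3 : ℝ) ≤ ((n - (m + 1) : ℕ) : ℝ) := by
    exact_mod_cast (by omega : 3 ≤ n - (m + 1))
  have hx0 := h.eigenpair.1 (p 0)
  have hpow : (2 : ℝ) ^ m < lam ^ m := by
    have := (pow_lt_pow_left₀ (by linarith : (2 : ℝ) < t - 1) (by norm_num)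
      (by have := h.one_le; omega)).trans_le (pow_le_chebU (by linarith) m)
    nlinarith [h.one_le_pow_mul]
  exact lt_of_pow_lt_pow_left₀ m h.lam_pos.le hpow

lemma sub_lt_lam (h : ExtremalPath G lam x p m) (hn : 30 ≤ n) :
    ((n - (m + 1) : ℕ) : ℝ) < lam := by
  obtain ⟨t, ht, hle⟩ := h.exists_chebU_mul_le_one h.one_le (by have := h.add_four_le hn; omega)
  by_contra! hle'
  have hlam := (h.two_lt_lam hn).le
  have := chebU_lt_chebU hlam (hle'.trans_lt ht) (m - 1)
  rw [Nat.sub_add_cancel h.one_le] at this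
  nlinarith [h.one_le_chebU_mul hlam, h.eigenpair.1 (p 0)]

lemma degree_last (h : ExtremalPath G lam x p m) (hn : 30 ≤ n) : G.degree (p m) = n - m := by
  refine h.degree_last_le.antisymm ?_
  have : n - (m + 1) < G.degree (p m) := by
    exact_mod_cast (h.sub_lt_lam hn).trans_le (h.eigenpair.le_degree h.le_one h.eq_one)
  have := h.lt_card
  omega

lemma neighborFinset_last (h : ExtremalPath G lam x p m) (hn : 30 ≤ n) :
    G.neighborFinset (p m) = insert (p (m - 1)) (offPath p m) := by
  refine Finset.eq_of_subset_of_card_le h.neighborFinset_last_subset ?_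
  rw [G.card_neighborFinset_eq_degree, h.degree_last hn]
  have := (Finset.card_insert_le (p (m - 1)) (offPath p m)).trans_eq
    (congrArg (· + 1) h.card_offPath)
  have := h.lt_card
  omega

lemma pred_add_sum_offPath (h : ExtremalPath G lam x p m) (hn : 30 ≤ n) :
    x (p (m - 1)) + ∑ w ∈ offPath p m, x w = lam := by
  have := h.eigenpair.sum_neighborFinset (p m)
  rwa [h.neighborFinset_last hn, Finset.sum_insert (notMem_offPath (Nat.sub_le m 1)), h.eq_one,
    mul_one] at this

lemma lam_lt (h : ExtremalPath G lam x p m) (hn : 30 ≤ n) : lam < (n : ℝ) - m := by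
  have hsum : ∑ w ∈ offPath p m, x w ≤ (n : ℝ) - m - 1 := by
    have := (offPath p m).sum_le_card_nsmul x 1 fun w _ => h.le_one w
    rw [h.card_offPath, nsmul_one, Nat.cast_sub h.lt_card] at this
    push_cast at this
    linarith
  linarith [h.pred_add_sum_offPath hn, h.pred_lt_one]

lemma neighborFinset_subset_of_adj_last (h : ExtremalPath G lam x p m) {u : Fin n}
    (hu : u ∈ offPath p m) (hadj : G.Adj u (p m)) :
    G.neighborFinset u ⊆
      insert (p (m - 2)) (insert (p (m - 1)) (insert (p m) ((offPath p m).erase u))) := by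
  intro w hw
  rw [SimpleGraph.mem_neighborFinset] at hw
  simp only [Finset.mem_insert, Finset.mem_erase]
  by_cases hoff : w ∈ offPath p m
  · exact .inr (.inr (.inr ⟨(G.ne_of_adj hw).symm, hoff⟩))
  obtain ⟨i, hi, rfl⟩ := exists_eq_of_notMem_offPath hoff
  have := h.isGeodesic.le_add_two_of_adj_of_adj h.connected hi le_rfl hw.symm hadj
  rcases (by omega : i = m - 2 ∨ i = m - 1 ∨ i = m) with rfl | rfl | rfl <;> simp

lemma degree_le_of_mem_offPath (h : ExtremalPath G lam x p m) (hn : 30 ≤ n) {u : Fin n}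
    (hu : u ∈ offPath p m) : G.degree u ≤ n - m := by
  by_contra! hdeg
  have hm : 2 ≤ m := by have := G.degree_lt_card_verts u; simp at this; omega
  have hadj : G.Adj (p m) u := by
    rw [← SimpleGraph.mem_neighborFinset, h.neighborFinset_last hn]
    exact Finset.mem_insert_of_mem hu
  have hsum := h.eigenpair.sum_eq_of_neighborFinset_subset
    (h.neighborFinset_subset_of_adj_last hu hadj.symm) ?_
  · rw [Finset.sum_insert, Finset.sum_insert, Finset.sum_insert, Finset.sum_erase_eq_sub hu,
      h.eq_one] at hsum
    · nlinarith [h.pred_add_sum_offPath hn, h.le_one u, h.eigenpair.1 (p (m - 2)), h.lam_pos]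
    · exact fun hm => notMem_offPath le_rfl (Finset.mem_of_mem_erase hm)
    · simp only [Finset.mem_insert, not_or]
      exact ⟨h.apply_ne (by omega) le_rfl (by omega),
        fun hm => notMem_offPath (by omega) (Finset.mem_of_mem_erase hm)⟩
    · simp only [Finset.mem_insert, not_or]
      exact ⟨h.apply_ne (by omega) (by omega) (by omega),
        h.apply_ne (by omega) le_rfl (by omega),
        fun hm => notMem_offPath (by omega) (Finset.mem_of_mem_erase hm)⟩
  · grw [Finset.card_insert_le, Finset.card_insert_le, Finset.card_insert_le,
      Finset.card_erase_of_mem hu, h.card_offPath]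
    have := h.add_four_le hn
    omega

lemma neighborFinset_subset_of_path (h : ExtremalPath G lam x p m) {i : ℕ} (hi : i ≤ m) :
    G.neighborFinset (p i) ⊆ insert (p (i - 1)) (insert (p (i + 1)) (offPath p m)) := by
  intro w hw
  rw [SimpleGraph.mem_neighborFinset] at hw
  simp only [Finset.mem_insert]
  by_cases hoff : w ∈ offPath p m
  · exact .inr (.inr hoff)
  obtain ⟨j, hj, rfl⟩ := exists_eq_of_notMem_offPath hoff
  have hij : i ≠ j := fun he => G.loopless.irrefl _ (he ▸ hw)
  rcases le_total i j with hle | hle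
  · have := h.isGeodesic.le_add_one_of_adj h.connected hle hj hw
    exact .inr (.inl (by rw [show j = i + 1 by omega]))
  · have := h.isGeodesic.le_add_one_of_adj h.connected hle hi hw.symm
    exact .inl (by rw [show j = i - 1 by omega])

lemma degree_le_of_path (h : ExtremalPath G lam x p m) (hn : 30 ≤ n) {i : ℕ} (hi : i ≤ m) :
    G.degree (p i) ≤ n - m := by
  by_contra! hdeg
  have hm := h.add_four_le hn
  have him : i < m := hi.lt_of_ne fun he => by rw [he, h.degree_last hn] at hdeg; omega
  have hN := Finset.eq_of_subset_of_card_le (h.neighborFinset_subset_of_path hi) (by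
    grw [G.card_neighborFinset_eq_degree, Finset.card_insert_le, Finset.card_insert_le,
      h.card_offPath]
    omega)
  have hi0 : i ≠ 0 := by
    rintro rfl
    exact G.notMem_neighborFinset_self (p 0) (hN ▸ Finset.mem_insert_self _ _)
  obtain ⟨w, hw⟩ : (offPath p m).Nonempty := Finset.card_pos.1 (by rw [h.card_offPath]; omega)
  have hwi : G.Adj (p i) w := by
    rw [← SimpleGraph.mem_neighborFinset, hN]
    exact Finset.mem_insert_of_mem (Finset.mem_insert_of_mem hw)
  have hwm : G.Adj w (p m) := by
    rw [G.adj_comm, ← SimpleGraph.mem_neighborFinset, h.neighborFinset_last hn]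
    exact Finset.mem_insert_of_mem hw
  have := h.isGeodesic.le_add_two_of_adj_of_adj h.connected him.le le_rfl hwi hwm
  have hnext : x (p (m - 1)) ≤ x (p (i + 1)) := by
    rcases (by omega : i + 1 = m - 1 ∨ i + 1 = m) with he | he
    · rw [he]
    · rw [he, h.eq_one]; exact h.le_one _
  have hsum := h.eigenpair.sum_neighborFinset (p i)
  rw [hN, Finset.sum_insert, Finset.sum_insert (notMem_offPath (by omega))] at hsum
  · nlinarith [h.pred_add_sum_offPath hn, h.le_one (p i), h.eigenpair.1 (p (i - 1)), h.lam_pos]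
  · simp only [Finset.mem_insert, not_or]
    exact ⟨h.apply_ne (by omega) (by omega) (by omega), notMem_offPath (by omega)⟩

lemma degree_le (h : ExtremalPath G lam x p m) (hn : 30 ≤ n) (u : Fin n) :
    G.degree u ≤ n - m := by
  by_cases hu : u ∈ offPath p m
  · exact h.degree_le_of_mem_offPath hn hu
  · obtain ⟨i, hi, rfl⟩ := exists_eq_of_notMem_offPath hu
    exact h.degree_le_of_path hn hi

end ExtremalPath

/-- Extremal setup: `G` is a connected graph on `n ≥ 5000` vertices maximizing the
principal ratio among all connected graphs on `n` vertices; `x` is its principal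
eigenvector scaled so that the maximum entry is `1`; `v 0, …, v (k-1)` is a shortest path
from a minimum-entry vertex to a maximum-entry vertex, where `k - 1` is the shortest
distance between any minimum-entry vertex and any maximum-entry vertex. -/
theorem max_degree_eq
    {n k : ℕ} (hn : 5000 ≤ n) (hk : 2 ≤ k)
    (G : SimpleGraph (Fin n)) (hG : G.Connected)
    (lam : ℝ) (x : Fin n → ℝ)
    (hpe : IsPrincipalEigenpair G lam x)
    (hx1 : ∀ u, x u ≤ 1)
    (hext : ∀ (G' : SimpleGraph (Fin n)), G'.Connected →
      ∀ (lam' : ℝ) (x' : Fin n → ℝ), IsPrincipalEigenpair G' lam' x' →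
        pRatio x' ≤ pRatio x)
    (v : Fin k → Fin n)
    (hpath : ∀ (i : ℕ) (hi : i + 1 < k), G.Adj (v ⟨i, by omega⟩) (v ⟨i + 1, hi⟩))
    (hmin : ∀ u, x (v ⟨0, by omega⟩) ≤ x u)
    (hvk : x (v ⟨k - 1, by omega⟩) = 1)
    (hshort : ∀ a b : Fin n, (∀ u, x a ≤ x u) → x b = 1 → k - 1 ≤ G.dist a b) :
    deg G (v ⟨k - 1, by omega⟩) = n - k + 1 ∧
    (∀ u : Fin n, deg G u ≤ n - k + 1) ∧
    lam < (n : ℝ) - k + 1 := by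
  set p : ℕ → Fin n := fun j => v ⟨min j (k - 1), by omega⟩
  have hp : ∀ j (hj : j < k), p j = v ⟨j, hj⟩ := fun j hj =>
    congrArg v (Fin.ext (min_eq_left (by omega)))
  have h : ExtremalPath G lam x p (k - 1) :=
    { connected := hG
      eigenpair := hpe
      le_one := hx1
      extremal := hext
      one_le := by omega
      adj := fun i hi => by rw [hp i (by omega), hp (i + 1) (by omega)]; exact hpath i (by omega)
      min_le := by rw [hp 0 (by omega)]; exact hmin
      eq_one := by rw [hp (k - 1) (by omega)]; exact hvk
      le_dist := fun b hb => by rw [hp 0 (by omega)]; exact hshort _ b hmin hb }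
  have hn30 : 30 ≤ n := by omega
  have hkn := h.add_four_le hn30
  rw [← hp (k - 1) (by omega), deg_eq_degree, h.degree_last hn30]
  refine ⟨by omega, fun u => by rw [deg_eq_degree]; have := h.degree_le hn30 u; omega, ?_⟩
  have := h.lam_lt hn30
  rw [Nat.cast_sub (by omega : 1 ≤ k)] at this
  push_cast at this
  linarith
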